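/- arXiv:1803.08404 — 5 statements merged into one kernel-verified Lean document; each statement's English description precedes it below -/
import Mathlib

section
/- For each n ≥ 1 let X_n = Z_n^{(1)} and Y_n = Z_n^{(-1)} be the Chu sequences of length n with parameters 1 and -1. There exists an absolute constant c > 0 such that |CDF(X_n, Y_n) − 1| ≤ c·n^{-1/6} for all n ≥ 1; in particular CDF(X_n, Y_n) → 1 as n → ∞. -/
open Complex Real Filter Topology

noncomputable section

/-- Zero-extension of a (length `n`) sequence to all of `ℤ`: entries outside
`{0, ..., n-1}` are set to `0`. -/
def seqExt (n : ℕ) (A : ℤ → ℂ) : ℤ → ℂ := fun j => if 0 ≤ j ∧ j < (n : ℤ) then A j else 0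

/-- Aperiodic crosscorrelation of two sequences of length `n` at shift `u`:
`C_{A,B}(u) = ∑_{j ∈ ℤ} a_j * conj (b_{j+u})`.  Since the zero-extended entries
vanish outside `{0, ..., n-1}`, the sum over `ℤ` equals the sum over that range. -/
def corr (n : ℕ) (A B : ℤ → ℂ) (u : ℤ) : ℂ :=
  ∑ j ∈ Finset.Icc (0 : ℤ) ((n : ℤ) - 1), seqExt n A j * (starRingEnd ℂ) (seqExt n B (j + u))

/-- Crosscorrelation demerit factor `CDF(A,B)`.  The correlations vanish for
`|u| ≥ n`, so the sum over all `u ∈ ℤ` equals the sum over `-(n-1) ≤ u ≤ n-1`. -/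
def cdf (n : ℕ) (A B : ℤ → ℂ) : ℝ :=
  (∑ u ∈ Finset.Icc (-(n : ℤ) + 1) ((n : ℤ) - 1), ‖corr n A B u‖ ^ 2) /
    (‖corr n A A 0‖ * ‖corr n B B 0‖)

/-- Autocorrelation demerit factor `ADF(A)`. -/
def adf (n : ℕ) (A : ℤ → ℂ) : ℝ :=
  (∑ u ∈ Finset.Icc (-(n : ℤ) + 1) ((n : ℤ) - 1) \ {0}, ‖corr n A A u‖ ^ 2) /
    ‖corr n A A 0‖ ^ 2

/-- Pursley-Sarwate criterion `PSC(A,B)`. -/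
def psc (n : ℕ) (A B : ℤ → ℂ) : ℝ := Real.sqrt (adf n A * adf n B) + cdf n A B

/-- The Chu sequence of length `n` with parameter `a`: `z_j = exp(π i a j² / n)`. -/
def chu (n : ℕ) (a : ℤ) : ℤ → ℂ :=
  fun j => Complex.exp (Real.pi * Complex.I * (a : ℂ) * (j : ℂ) ^ 2 / (n : ℂ))

/-- Generalised Gauss sum `S_N(x, θ) = ∑_{j=1}^N exp(π i x j² + 2 π i θ j)`. -/
def gSum (N : ℕ) (x θ : ℝ) : ℂ :=
  ∑ j ∈ Finset.Icc 1 N,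
    Complex.exp (Real.pi * Complex.I * (x : ℂ) * (j : ℂ) ^ 2 +
      2 * Real.pi * Complex.I * (θ : ℂ) * (j : ℂ))

/-!
Since `chu n (-1)` is the complex conjugate of `chu n 1`, the two sequences have autocorrelations
of equal modulus. Expanding `∑ᵤ |C_{A,B}(u)|²` gives `∑ᵤ C_{A,A}(u) conj C_{B,B}(u)`, whose
`u = 0` term is `C_{A,A}(0) C_{B,B}(0)`; Cauchy–Schwarz on the rest gives
`|CDF(A,B) - 1| ≤ √(ADF(A) ADF(B))`, which here is `ADF(X_n)`. The autocorrelation of `X_n` at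
shift `d` is a geometric sum of modulus `|sin(π d²/n)| / sin(π d/n) ≤ 2 min(n/e, e)` with
`e = min(d, n - d)`, and splitting `∑ₑ min(n/e, e)²` at `e = √n` gives `ADF(X_n) = O(n^{-1/2})`.
-/

open Finset

lemma seqExt_of_mem {n : ℕ} {A : ℤ → ℂ} {j : ℤ} (h : j ∈ Icc (0 : ℤ) (n - 1)) :
    seqExt n A j = A j := by
  rw [mem_Icc] at h
  exact if_pos ⟨h.1, by omega⟩

lemma seqExt_of_notMem {n : ℕ} {A : ℤ → ℂ} {j : ℤ} (h : j ∉ Icc (0 : ℤ) (n - 1)) :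
    seqExt n A j = 0 := by
  rw [mem_Icc] at h
  exact if_neg (by omega)

lemma corr_self_zero_eq_norm (n : ℕ) (A : ℤ → ℂ) : corr n A A 0 = (‖corr n A A 0‖ : ℂ) := by
  have h : corr n A A 0 = ((∑ j ∈ Icc (0 : ℤ) (n - 1), Complex.normSq (seqExt n A j) : ℝ) : ℂ) := by
    simp [corr, Complex.mul_conj]
  rw [h, Complex.norm_real, Real.norm_of_nonneg (sum_nonneg fun j _ => Complex.normSq_nonneg _)]

lemma corr_neg (n : ℕ) (A B : ℤ → ℂ) (u : ℤ) :
    corr n A B (-u) = starRingEnd ℂ (corr n B A u) := by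
  set I := Icc (0 : ℤ) (n - 1)
  have hL : ∀ j ∈ I, seqExt n A j * starRingEnd ℂ (seqExt n B (j + -u)) ≠ 0 → j + -u ∈ I :=
    fun j _ hne => by_contra fun h => hne (by rw [seqExt_of_notMem h, map_zero, mul_zero])
  have hR : ∀ k ∈ I, starRingEnd ℂ (seqExt n B k * starRingEnd ℂ (seqExt n A (k + u))) ≠ 0 →
      k + u ∈ I :=
    fun k _ hne => by_contra fun h => hne (by rw [seqExt_of_notMem h]; simp)
  rw [corr, corr, map_sum, ← sum_filter_of_ne hL, ← sum_filter_of_ne hR]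
  refine sum_nbij' (· + -u) (· + u) ?_ ?_ (fun j _ => by omega) (fun k _ => by omega) ?_
  · intro j hj
    simp only [mem_filter, I, mem_Icc] at hj ⊢
    omega
  · intro k hk
    simp only [mem_filter, I, mem_Icc] at hk ⊢
    omega
  · intro j _
    rw [map_mul, Complex.conj_conj, neg_add_cancel_right, mul_comm]

lemma sum_corr_mul_conj_corr (n : ℕ) (A B : ℤ → ℂ) :
    ∑ u ∈ Icc (-(n : ℤ) + 1) (n - 1), corr n A B u * starRingEnd ℂ (corr n A B u) =
      ∑ u ∈ Icc (-(n : ℤ) + 1) (n - 1), corr n A A u * starRingEnd ℂ (corr n B B u) := by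
  set I := Icc (0 : ℤ) (n - 1)
  set U := Icc (-(n : ℤ) + 1) (n - 1)
  let term (C D E F : ℤ → ℂ) (p : ℤ × ℤ × ℤ) : ℂ :=
    seqExt n C p.2.1 * starRingEnd ℂ (seqExt n D (p.2.1 + p.1)) *
      starRingEnd ℂ (seqExt n E p.2.2 * starRingEnd ℂ (seqExt n F (p.2.2 + p.1)))
  have expand (C D E F : ℤ → ℂ) : ∑ u ∈ U, corr n C D u * starRingEnd ℂ (corr n E F u) =
      ∑ p ∈ U ×ˢ I ×ˢ I, term C D E F p := by
    simp only [sum_product, corr, map_sum, sum_mul_sum]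
    rfl
  have support (C D E F : ℤ → ℂ) (p : ℤ × ℤ × ℤ) (_ : p ∈ U ×ˢ I ×ˢ I)
      (hp : term C D E F p ≠ 0) : p.2.1 + p.1 ∈ I ∧ p.2.2 + p.1 ∈ I := by
    constructor <;> by_contra h <;> exact hp (by simp [term, seqExt_of_notMem h])
  rw [expand, expand, ← sum_filter_of_ne (support A B A B), ← sum_filter_of_ne (support A A B B)]
  -- `(u, j, k) ↦ (k - j, j, j + u)` is an involution carrying one support onto the other.
  let σ : ℤ × ℤ × ℤ → ℤ × ℤ × ℤ := fun p => (p.2.2 - p.2.1, p.2.1, p.2.1 + p.1)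
  refine sum_nbij' σ σ ?_ ?_ (fun p _ => by simp [σ]) (fun p _ => by simp [σ]) ?_
  · intro p hp
    simp only [mem_filter, mem_product, I, U, mem_Icc, σ] at hp ⊢
    omega
  · intro p hp
    simp only [mem_filter, mem_product, I, U, mem_Icc, σ] at hp ⊢
    omega
  · rintro ⟨u, j, k⟩ _
    simp only [term, σ, map_mul, Complex.conj_conj, add_sub_cancel]
    ring_nf

lemma sum_sq_norm_corr_eq (n : ℕ) (A B : ℤ → ℂ) :
    ∑ u ∈ Icc (-(n : ℤ) + 1) (n - 1), ‖corr n A B u‖ ^ 2 =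
      (∑ u ∈ Icc (-(n : ℤ) + 1) (n - 1), corr n A A u * starRingEnd ℂ (corr n B B u)).re := by
  rw [← sum_corr_mul_conj_corr, Complex.re_sum]
  refine sum_congr rfl fun u _ => ?_
  rw [Complex.mul_conj, Complex.ofReal_re, Complex.normSq_eq_norm_sq]

/-- Pursley–Sarwate bound. -/
theorem abs_cdf_sub_one_le_sqrt_adf_mul_adf {n : ℕ} {A B : ℤ → ℂ} (hA : corr n A A 0 ≠ 0)
    (hB : corr n B B 0 ≠ 0) : |cdf n A B - 1| ≤ √(adf n A * adf n B) := by
  set U := Icc (-(n : ℤ) + 1) (n - 1)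
  set α := ‖corr n A A 0‖
  set β := ‖corr n B B 0‖
  set R := ∑ u ∈ U \ {0}, corr n A A u * starRingEnd ℂ (corr n B B u)
  have hα : 0 < α := norm_pos_iff.mpr hA
  have hβ : 0 < β := norm_pos_iff.mpr hB
  have hn : 0 < n := Nat.pos_of_ne_zero fun h => hA (by simp [h, corr])
  have h0 : (0 : ℤ) ∈ U := by simp only [U, mem_Icc]; omega
  have hcdf : cdf n A B - 1 = R.re / (α * β) := by
    have hzero : corr n A A 0 * starRingEnd ℂ (corr n B B 0) = ((α * β : ℝ) : ℂ) := by
      rw [corr_self_zero_eq_norm n A, corr_self_zero_eq_norm n B, Complex.conj_ofReal,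
        Complex.ofReal_mul]
    rw [cdf, sum_sq_norm_corr_eq, ← add_sum_erase U _ h0, ← sdiff_singleton_eq_erase, hzero,
      Complex.add_re, Complex.ofReal_re]
    field_simp
    ring
  have hR : |R.re| ≤ √(∑ u ∈ U \ {0}, ‖corr n A A u‖ ^ 2) * √(∑ u ∈ U \ {0}, ‖corr n B B u‖ ^ 2) :=
    calc |R.re| ≤ ‖R‖ := Complex.abs_re_le_norm R
      _ ≤ ∑ u ∈ U \ {0}, ‖corr n A A u‖ * ‖corr n B B u‖ := by
        refine (norm_sum_le _ _).trans_eq (sum_congr rfl fun u _ => ?_)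
        rw [norm_mul, Complex.norm_conj]
      _ ≤ _ := Real.sum_mul_le_sqrt_mul_sqrt _ _ _
  rw [hcdf, adf, adf, abs_div, abs_of_pos (mul_pos hα hβ), div_mul_div_comm,
    Real.sqrt_div' _ (by positivity), Real.sqrt_mul (sum_nonneg fun _ _ => sq_nonneg _),
    Real.sqrt_mul (by positivity), Real.sqrt_sq hα.le, Real.sqrt_sq hβ.le]
  exact div_le_div_of_nonneg_right hR (mul_pos hα hβ).le

lemma sum_Icc_zero_eq_sum_range {M : Type*} [AddCommMonoid M] (n : ℕ) (f : ℤ → M) :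
    ∑ j ∈ Icc (0 : ℤ) (n - 1), f j = ∑ k ∈ range n, f k := by
  rw [Int.Icc_eq_finset_map, sum_map]
  simp

lemma corr_natCast_eq_sum_range {n d : ℕ} (A B : ℤ → ℂ) (hd : d ≤ n) :
    corr n A B d = ∑ k ∈ range (n - d), A k * starRingEnd ℂ (B (k + d)) := by
  have mem {j : ℤ} (h0 : 0 ≤ j) (hj : j < n) : j ∈ Icc (0 : ℤ) (n - 1) := by
    rw [mem_Icc]; omega
  rw [corr, sum_Icc_zero_eq_sum_range, ← sum_subset (range_subset_range.mpr (Nat.sub_le n d))]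
  · refine sum_congr rfl fun k hk => ?_
    rw [mem_range] at hk
    rw [seqExt_of_mem (mem (by positivity) (by omega)),
      seqExt_of_mem (mem (by positivity) (by omega))]
  · intro k _ hk
    rw [mem_range] at hk
    rw [seqExt_of_notMem (A := B) (by rw [mem_Icc]; omega), map_zero, mul_zero]

lemma chu_eq_exp (n : ℕ) (a j : ℤ) :
    chu n a j = Complex.exp (I * ((π * a * j ^ 2 / n : ℝ) : ℂ)) := by
  rw [chu]; congr 1; push_cast; ring

lemma norm_chu (n : ℕ) (a j : ℤ) : ‖chu n a j‖ = 1 := by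
  rw [chu_eq_exp, mul_comm, Complex.norm_exp_ofReal_mul_I]

lemma chu_neg (n : ℕ) (a j : ℤ) : chu n (-a) j = starRingEnd ℂ (chu n a j) := by
  rw [chu_eq_exp, chu_eq_exp, ← Complex.exp_conj, map_mul, Complex.conj_I, Complex.conj_ofReal]
  congr 1; push_cast; ring

lemma corr_chu_neg (n : ℕ) (a u : ℤ) :
    corr n (chu n (-a)) (chu n (-a)) u = starRingEnd ℂ (corr n (chu n a) (chu n a) u) := by
  have h (j : ℤ) : seqExt n (chu n (-a)) j = starRingEnd ℂ (seqExt n (chu n a) j) := by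
    unfold seqExt; split_ifs <;> simp [chu_neg]
  simp only [corr, h, map_sum, map_mul]

lemma adf_chu_neg (n : ℕ) (a : ℤ) : adf n (chu n (-a)) = adf n (chu n a) := by
  simp only [adf, corr_chu_neg, Complex.norm_conj]

lemma corr_chu_self_zero (n : ℕ) (a : ℤ) : corr n (chu n a) (chu n a) 0 = n := by
  rw [← Nat.cast_zero, corr_natCast_eq_sum_range _ _ (Nat.zero_le n)]
  simp [Complex.mul_conj, Complex.normSq_eq_norm_sq, norm_chu]

lemma chu_one_mul_conj (n d k : ℕ) :
    chu n 1 k * starRingEnd ℂ (chu n 1 (k + d)) =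
      Complex.exp (I * ((-(π * d ^ 2 / n)) : ℝ)) *
        Complex.exp (I * ((-(2 * π * d / n)) : ℝ)) ^ k := by
  rw [chu_eq_exp, chu_eq_exp, ← Complex.exp_conj, ← Complex.exp_nat_mul, ← Complex.exp_add,
    ← Complex.exp_add, map_mul, Complex.conj_I, Complex.conj_ofReal]
  congr 1; push_cast; ring

lemma norm_corr_chu_one {n d : ℕ} (hd : 0 < d) (hdn : d < n) :
    ‖corr n (chu n 1) (chu n 1) d‖ = |Real.sin (π * d ^ 2 / n)| / Real.sin (π * d / n) := by
  have hn : (0 : ℝ) < n := by exact_mod_cast hd.trans hdn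
  set q := Complex.exp (I * ((-(2 * π * d / n)) : ℝ))
  have hsin : 0 < Real.sin (π * d / n) := by
    apply Real.sin_pos_of_pos_of_lt_pi (by positivity)
    rw [div_lt_iff₀ hn]
    gcongr
  have hq : ‖q - 1‖ = 2 * Real.sin (π * d / n) := by
    rw [Complex.norm_exp_I_mul_ofReal_sub_one, norm_mul, Real.norm_two, Real.norm_eq_abs,
      show -(2 * π * d / n) / 2 = -(π * d / n) by ring, Real.sin_neg, abs_neg, abs_of_pos hsin]
  have hq1 : q ≠ 1 := fun h => by rw [h, sub_self, norm_zero] at hq; linarith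
  have hqpow : ‖q ^ (n - d) - 1‖ = 2 * |Real.sin (π * d ^ 2 / n)| := by
    have hnC : (n : ℂ) ≠ 0 := by exact_mod_cast hn.ne'
    have hexp : ((n - d : ℕ) : ℂ) * (I * ((-(2 * π * d / n)) : ℝ)) =
        I * ((π * d ^ 2 / n - d * π) * 2 : ℝ) := by
      push_cast [Nat.cast_sub hdn.le]
      field_simp
      ring
    rw [← Complex.exp_nat_mul, hexp, Complex.norm_exp_I_mul_ofReal_sub_one,
      mul_div_cancel_right₀ _ two_ne_zero,
      Real.sin_sub_nat_mul_pi, norm_mul, norm_mul, Real.norm_two, norm_pow, norm_neg, norm_one,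
      one_pow, one_mul, Real.norm_eq_abs]
  rw [corr_natCast_eq_sum_range _ _ hdn.le]
  simp_rw [chu_one_mul_conj]
  rw [← mul_sum, geom_sum_eq hq1, norm_mul, norm_div, hqpow, hq, mul_comm I,
    Complex.norm_exp_ofReal_mul_I, one_mul, mul_div_mul_left _ _ two_ne_zero]

lemma abs_sin_sq_div_sin_reflect {n d : ℕ} (hdn : d ≤ n) :
    |Real.sin (π * (n - d : ℕ) ^ 2 / n)| / Real.sin (π * (n - d : ℕ) / n) =
      |Real.sin (π * d ^ 2 / n)| / Real.sin (π * d / n) := by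
  rcases Nat.eq_zero_or_pos n with rfl | hn
  · simp
  have hn' : (n : ℝ) ≠ 0 := by positivity
  have hsq : π * (n - d : ℕ) ^ 2 / n = π * d ^ 2 / n + ((n - 2 * d : ℤ) : ℝ) * π := by
    push_cast [Nat.cast_sub hdn]; field_simp; ring
  have hlin : π * (n - d : ℕ) / n = π - π * d / n := by
    push_cast [Nat.cast_sub hdn]; field_simp
  rw [hsq, hlin, Real.sin_add_int_mul_pi, abs_mul, abs_neg_one_zpow, one_mul, Real.sin_pi_sub]

lemma abs_sin_sq_div_sin_le {n d : ℕ} (hd : 0 < d) (hdn : d < n) :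
    |Real.sin (π * d ^ 2 / n)| / Real.sin (π * d / n) ≤
      2 * min ((n : ℝ) / (min d (n - d) : ℕ)) (min d (n - d) : ℕ) := by
  wlog h : 2 * d ≤ n generalizing d
  · rw [← abs_sin_sq_div_sin_reflect hdn.le,
      show min d (n - d) = min (n - d) (n - (n - d)) by omega]
    exact this (by omega) (by omega) (by omega)
  rw [show min d (n - d) = d by omega]
  have hn : (0 : ℝ) < n := by exact_mod_cast hd.trans hdn
  have hd' : (0 : ℝ) < d := by exact_mod_cast hd
  have hsin : 2 * d / n ≤ Real.sin (π * d / n) := by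
    have hle : π * d / n ≤ π / 2 := by
      rw [div_le_div_iff₀ hn two_pos, mul_assoc, mul_comm (d : ℝ)]
      gcongr
      exact_mod_cast h
    calc 2 * d / n = 2 / π * (π * d / n) := by field_simp
      _ ≤ _ := Real.mul_le_sin (by positivity) hle
  rw [div_le_iff₀ ((by positivity : (0 : ℝ) < 2 * d / n).trans_le hsin)]
  calc |Real.sin (π * d ^ 2 / n)| ≤ min 1 (π * d ^ 2 / n) :=
        le_min (Real.abs_sin_le_one _)
          (Real.abs_sin_le_abs.trans_eq (abs_of_nonneg (by positivity)))
    _ ≤ min 4 (4 * (d : ℝ) ^ 2 / n) := by gcongr <;> linarith [Real.pi_le_four]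
    _ = 2 * min ((n : ℝ) / d) d * (2 * d / n) := by
        rw [mul_min_of_nonneg _ _ two_pos.le, min_mul_of_nonneg _ _ (by positivity)]
        congr 1 <;> field_simp <;> ring
    _ ≤ 2 * min ((n : ℝ) / d) d * Real.sin (π * d / n) := by gcongr

lemma sum_Ioo_comp_min_sub_le (n : ℕ) {f : ℕ → ℝ} (hf : ∀ e, 0 ≤ f e) :
    ∑ d ∈ Ioo 0 n, f (min d (n - d)) ≤ 2 * ∑ d ∈ Ioo 0 n, f d := by
  have hreflect : ∑ d ∈ Ioo 0 n, f (n - d) = ∑ d ∈ Ioo 0 n, f d :=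
    sum_nbij' (n - ·) (n - ·) (fun d hd => by simp only [mem_Ioo] at hd ⊢; omega)
      (fun d hd => by simp only [mem_Ioo] at hd ⊢; omega)
      (fun d hd => by simp only [mem_Ioo] at hd; omega)
      (fun d hd => by simp only [mem_Ioo] at hd; omega) (fun _ _ => rfl)
  calc ∑ d ∈ Ioo 0 n, f (min d (n - d)) ≤ ∑ d ∈ Ioo 0 n, (f d + f (n - d)) := by
        gcongr with d
        rcases min_choice d (n - d) with h | h <;> rw [h] <;> linarith [hf d, hf (n - d)]
    _ = 2 * ∑ d ∈ Ioo 0 n, f d := by rw [sum_add_distrib, hreflect, two_mul]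

lemma sum_Ioo_sq_min_div_le (n : ℕ) :
    ∑ e ∈ Ioo 0 n, min ((n : ℝ) / e) e ^ 2 ≤ 3 * n * √n := by
  rcases n.eq_zero_or_pos with rfl | hn0
  · simp
  set s := Nat.sqrt n
  have hs : (s : ℝ) ≤ √n := Real.nat_sqrt_le_real_sqrt
  have hs1 : √n < s + 1 := Real.real_sqrt_lt_nat_sqrt_succ
  have hsq : (s : ℝ) ^ 2 ≤ n := by exact_mod_cast Nat.sqrt_le' n
  have hn : (0 : ℝ) ≤ n := n.cast_nonneg
  have small : ∑ e ∈ Ioo 0 n with e ≤ s, min ((n : ℝ) / e) e ^ 2 ≤ n * √n :=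
    calc ∑ e ∈ Ioo 0 n with e ≤ s, min ((n : ℝ) / e) e ^ 2
        ≤ ∑ e ∈ Ioo 0 n with e ≤ s, (s : ℝ) ^ 2 := by
          refine sum_le_sum fun e he => ?_
          have hes : (e : ℝ) ≤ s := by exact_mod_cast (mem_filter.mp he).2
          have hmin : 0 ≤ min ((n : ℝ) / e) e := le_min (by positivity) (by positivity)
          gcongr
          exact (min_le_right _ _).trans hes
      _ ≤ s * s ^ 2 := by
          rw [sum_const, nsmul_eq_mul]
          gcongr
          calc #{e ∈ Ioo 0 n | e ≤ s} ≤ #(Icc 1 s) := card_le_card fun e he => by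
                simp only [mem_filter, mem_Ioo, mem_Icc] at he ⊢; omega
            _ = s := by simp
      _ ≤ √n * n := by gcongr
      _ = n * √n := mul_comm _ _
  have large : ∑ e ∈ Ioo 0 n with ¬e ≤ s, min ((n : ℝ) / e) e ^ 2 ≤ 2 * n * √n :=
    calc ∑ e ∈ Ioo 0 n with ¬e ≤ s, min ((n : ℝ) / e) e ^ 2
        ≤ ∑ e ∈ Ioo s n, (n : ℝ) ^ 2 * ((e : ℝ) ^ 2)⁻¹ := by
          refine sum_le_sum_of_subset_of_nonneg
            (fun e he => by simp only [mem_filter, mem_Ioo] at he ⊢; omega)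
            (fun e _ _ => by positivity) |>.trans' (sum_le_sum fun e he => ?_)
          have he : (0 : ℝ) < e := by simp only [mem_filter, mem_Ioo] at he; exact_mod_cast he.1.1
          calc min ((n : ℝ) / e) e ^ 2 ≤ ((n : ℝ) / e) ^ 2 :=
                pow_le_pow_left₀ (le_min (by positivity) he.le) (min_le_left _ _) 2
            _ = (n : ℝ) ^ 2 * ((e : ℝ) ^ 2)⁻¹ := by rw [div_pow, div_eq_mul_inv]
      _ ≤ n ^ 2 * (2 / (s + 1)) := by rw [← mul_sum]; gcongr; exact sum_Ioo_inv_sq_le s n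
      _ ≤ n ^ 2 * (2 / √n) := by gcongr
      _ = 2 * n * √n := by
          have : 0 < √(n : ℝ) := by positivity
          field_simp
          rw [Real.sq_sqrt hn]
  rw [← sum_filter_add_sum_filter_not _ (· ≤ s)]
  linarith

lemma sum_Icc_sdiff_zero_of_neg_eq (n : ℕ) {f : ℤ → ℝ} (hf : ∀ u, f (-u) = f u) :
    ∑ u ∈ Icc (-(n : ℤ) + 1) (n - 1) \ {0}, f u = 2 * ∑ d ∈ Ioo 0 n, f d := by
  have hsplit : Icc (-(n : ℤ) + 1) (n - 1) \ {0} = Ioo (-(n : ℤ)) 0 ∪ Ioo 0 n := by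
    ext u; simp only [Finset.mem_sdiff, mem_Icc, mem_singleton, mem_union, mem_Ioo]; omega
  have hdisj : Disjoint (Ioo (-(n : ℤ)) 0) (Ioo 0 n) :=
    disjoint_left.mpr fun u hu hu' => by simp only [mem_Ioo] at hu hu'; omega
  have hneg : ∑ u ∈ Ioo (-(n : ℤ)) 0, f u = ∑ u ∈ Ioo (0 : ℤ) n, f u :=
    sum_nbij' (-·) (-·) (fun u hu => by simp only [mem_Ioo] at hu ⊢; omega)
      (fun u hu => by simp only [mem_Ioo] at hu ⊢; omega) (fun u _ => neg_neg u)
      (fun u _ => neg_neg u) (fun u _ => (hf u).symm)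
  have hcast : ∑ u ∈ Ioo (0 : ℤ) n, f u = ∑ d ∈ Ioo 0 n, f d :=
    sum_nbij' Int.toNat (↑) (fun u hu => by simp only [mem_Ioo] at hu ⊢; omega)
      (fun d hd => by simp only [mem_Ioo] at hd ⊢; omega)
      (fun u hu => by simp only [mem_Ioo] at hu; omega) (fun d _ => Int.toNat_natCast d)
      (fun u hu => by simp only [mem_Ioo] at hu; rw [Int.toNat_of_nonneg hu.1.le])
  rw [hsplit, sum_union hdisj, hneg, hcast, two_mul]

lemma sum_sq_norm_corr_chu_one_le (n : ℕ) :
    ∑ d ∈ Ioo 0 n, ‖corr n (chu n 1) (chu n 1) d‖ ^ 2 ≤ 24 * n * √n := by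
  set g : ℕ → ℝ := fun e => min ((n : ℝ) / e) e ^ 2
  have hg (e : ℕ) : 0 ≤ g e := sq_nonneg _
  calc ∑ d ∈ Ioo 0 n, ‖corr n (chu n 1) (chu n 1) d‖ ^ 2
      ≤ ∑ d ∈ Ioo 0 n, 4 * g (min d (n - d)) := by
        refine sum_le_sum fun d hd => ?_
        rw [mem_Ioo] at hd
        have h := (norm_corr_chu_one hd.1 hd.2).trans_le (abs_sin_sq_div_sin_le hd.1 hd.2)
        calc ‖corr n (chu n 1) (chu n 1) d‖ ^ 2 ≤ (2 * min ((n : ℝ) / (min d (n - d) : ℕ))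
            (min d (n - d) : ℕ)) ^ 2 := pow_le_pow_left₀ (norm_nonneg _) h 2
          _ = 4 * g (min d (n - d)) := by ring
    _ ≤ 4 * (2 * ∑ e ∈ Ioo 0 n, g e) := by
        rw [← mul_sum]; gcongr; exact sum_Ioo_comp_min_sub_le n hg
    _ ≤ 4 * (2 * (3 * n * √n)) := by gcongr; exact sum_Ioo_sq_min_div_le n
    _ = 24 * n * √n := by ring

lemma adf_chu_one_le (n : ℕ) : adf n (chu n 1) ≤ 48 / √n := by
  rcases n.eq_zero_or_pos with rfl | hn
  · simp [adf]
  have hsym (u : ℤ) :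
      ‖corr n (chu n 1) (chu n 1) (-u)‖ ^ 2 = ‖corr n (chu n 1) (chu n 1) u‖ ^ 2 := by
    rw [corr_neg, Complex.norm_conj]
  rw [adf, sum_Icc_sdiff_zero_of_neg_eq n hsym, corr_chu_self_zero, Complex.norm_natCast,
    div_le_div_iff₀ (by positivity) (by positivity)]
  have hsqrt : √(n : ℝ) * √n = n := Real.mul_self_sqrt n.cast_nonneg
  calc (2 * ∑ d ∈ Ioo 0 n, ‖corr n (chu n 1) (chu n 1) d‖ ^ 2) * √n ≤ 2 * (24 * n * √n) * √n := by
        gcongr; exact sum_sq_norm_corr_chu_one_le n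
    _ = 48 * n ^ 2 := by rw [pow_two]; linear_combination (48 * n) * hsqrt

lemma abs_cdf_chu_one_neg_one_sub_one_le {n : ℕ} (hn : 0 < n) :
    |cdf n (chu n 1) (chu n (-1)) - 1| ≤ 48 / √n := by
  have hzero (a : ℤ) : corr n (chu n a) (chu n a) 0 ≠ 0 := by
    rw [corr_chu_self_zero]; exact_mod_cast hn.ne'
  calc |cdf n (chu n 1) (chu n (-1)) - 1| ≤ √(adf n (chu n 1) * adf n (chu n (-1))) :=
        abs_cdf_sub_one_le_sqrt_adf_mul_adf (hzero 1) (hzero (-1))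
    _ = adf n (chu n 1) := by rw [adf_chu_neg, Real.sqrt_mul_self (by unfold adf; positivity)]
    _ ≤ 48 / √n := adf_chu_one_le n

/-- there is an absolute constant c > 0 with
|CDF(Z_n^(1), Z_n^(-1)) - 1| <= c * n^(-1/6) for all n >= 1; in particular the CDF tends to 1. -/
theorem cdf_chu_one_neg_one :
    (∃ c : ℝ, 0 < c ∧ ∀ n : ℕ, 1 ≤ n →
      |cdf n (chu n 1) (chu n (-1)) - 1| ≤ c * (n : ℝ) ^ (-(1 / 6 : ℝ))) ∧
    Tendsto (fun n : ℕ => cdf n (chu n 1) (chu n (-1))) atTop (𝓝 1) := by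
  have hbound (n : ℕ) (hn : 1 ≤ n) :
      |cdf n (chu n 1) (chu n (-1)) - 1| ≤ 48 * (n : ℝ) ^ (-(1 / 6 : ℝ)) :=
    calc |cdf n (chu n 1) (chu n (-1)) - 1| ≤ 48 / √n := abs_cdf_chu_one_neg_one_sub_one_le hn
      _ = 48 * (n : ℝ) ^ (-(1 / 2 : ℝ)) := by
          rw [Real.sqrt_eq_rpow, Real.rpow_neg n.cast_nonneg, div_eq_mul_inv]
      _ ≤ 48 * (n : ℝ) ^ (-(1 / 6 : ℝ)) := by
          gcongr 48 * ?_
          exact Real.rpow_le_rpow_of_exponent_le (by exact_mod_cast hn) (by norm_num)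
  refine ⟨⟨48, by norm_num, hbound⟩, ?_⟩
  have hlim : Tendsto (fun n : ℕ => 48 * (n : ℝ) ^ (-(1 / 6 : ℝ))) atTop (𝓝 0) := by
    simpa using
      ((tendsto_rpow_neg_atTop (by norm_num)).comp tendsto_natCast_atTop_atTop).const_mul 48
  exact tendsto_sub_nhds_zero_iff.mp
    (squeeze_zero_norm' ((eventually_ge_atTop 1).mono hbound) hlim)
end
end

section
/- The limit as n tends to infinity of n^{-3/2} · Σ_{1 ≤ u ≤ n/2} (sin(π u²/n) / (π u/n))² equals 1/(2π), where the sum runs over integers u with 1 ≤ u ≤ n/2. -/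
open Complex Real Filter Topology

noncomputable section

/-!
With `g t = (sin (π t²) / (π t))²`, the `u`-th term of the sum times `n^(-3/2)` is
`n^(-1/2) g (u / √n)`, so the expression is a Riemann sum of `g` with mesh `1 / √n` over
`(0, √n / 2]`. Since `g` is dominated by the nonincreasing integrable function `C / (1 + t²)`,
dominated convergence for the corresponding step functions gives the limit `∫₀^∞ g`.

To compute it, write `1 / t² = ∫₀^∞ e^(-ε t²) dε` and exchange the integrals. The inner integral
`∫₀^∞ sin² (a t²) e^(-ε t²) dt` is a difference of two complex Gaussian integrals, equal to
`(√π / 4) Re (ε^(-1/2) - (ε - 2 a i)^(-1/2))`. Its primitive `(√π / 2) Re (√ε - √(ε - 2 a i))`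
tends to `0` at infinity, because `√ε - √(ε - 2 a i) = 2 a i / (√ε + √(ε - 2 a i))`, and equals
`-√(π a) / 2` at `0`. So `∫₀^∞ sin² (a t²) / t² dt = √(π a) / 2`, and `∫₀^∞ g = 1 / (2π)`.
-/

open MeasureTheory Set

lemma re_cpow_half_nonneg (z : ℂ) : 0 ≤ (z ^ (1 / 2 : ℂ)).re := by
  rcases eq_or_ne z 0 with rfl | hz
  · simp
  rw [cpow_def_of_ne_zero hz, Complex.exp_re]
  have him : (Complex.log z * (1 / 2)).im = z.arg / 2 := by simp [Complex.log_im, div_eq_mul_inv]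
  rw [him]
  refine mul_nonneg (Real.exp_pos _).le (Real.cos_nonneg_of_mem_Icc ⟨?_, ?_⟩)
  · linarith [neg_pi_lt_arg z]
  · linarith [arg_le_pi z]

lemma cpow_half_sq (z : ℂ) : (z ^ (1 / 2 : ℂ)) ^ 2 = z := by
  simp [one_div]

lemma cpow_half_ofReal {x : ℝ} (hx : 0 ≤ x) : (x : ℂ) ^ (1 / 2 : ℂ) = (√x : ℂ) := by
  rw [Real.sqrt_eq_rpow, ofReal_cpow hx]
  norm_num

lemma norm_cpow_half_sub_mul_le (z w : ℂ) :
    ‖z ^ (1 / 2 : ℂ) - w ^ (1 / 2 : ℂ)‖ * ((z ^ (1 / 2 : ℂ)).re + (w ^ (1 / 2 : ℂ)).re) ≤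
      ‖z - w‖ := by
  set p := z ^ (1 / 2 : ℂ)
  set q := w ^ (1 / 2 : ℂ)
  have hfac : z - w = (p - q) * (p + q) := by
    rw [← cpow_half_sq z, ← cpow_half_sq w]; ring
  rw [hfac, norm_mul]
  exact mul_le_mul_of_nonneg_left (by simpa using Complex.re_le_norm (p + q)) (norm_nonneg _)

lemma re_cpow_half_neg_mul_I {a : ℝ} (ha : 0 ≤ a) : ((-(2 * a * I)) ^ (1 / 2 : ℂ)).re = √a := by
  have hw := cpow_half_sq (-(2 * a * I))
  have hw0 := re_cpow_half_nonneg (-(2 * a * I))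
  generalize (-(2 * a * I)) ^ (1 / 2 : ℂ) = w at hw hw0 ⊢
  have hre : w.re * w.re - w.im * w.im = 0 := by simpa [sq] using congrArg Complex.re hw
  have him : w.re * w.im + w.im * w.re = -(2 * a) := by simpa [sq] using congrArg Complex.im hw
  have hsq : w.re ^ 2 = a := by
    refine (sq_eq_sq₀ (sq_nonneg _) ha).mp ?_
    nlinarith
  rw [← hsq, Real.sqrt_sq hw0]

lemma ofReal_div_cpow {r : ℝ} (hr : 0 < r) {z : ℂ} (hz : z ∈ slitPlane) (w : ℂ) :
    ((r : ℂ) / z) ^ w = (r : ℂ) ^ w * z ^ (-w) := by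
  have hz0 : z ≠ 0 := slitPlane_ne_zero hz
  have hr0 : (r : ℂ) ≠ 0 := ofReal_ne_zero.mpr hr.ne'
  rw [div_eq_mul_inv, cpow_def_of_ne_zero (mul_ne_zero hr0 (inv_ne_zero hz0)),
    log_ofReal_mul hr (inv_ne_zero hz0), add_mul, Complex.exp_add, ofReal_log hr.le,
    ← cpow_def_of_ne_zero hr0,
    ← cpow_def_of_ne_zero (inv_ne_zero hz0), inv_cpow _ _ (slitPlane_arg_ne_pi hz), cpow_neg]

lemma integral_sin_sq_mul_gaussian_Ioi (a : ℝ) {ε : ℝ} (hε : 0 < ε) :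
    ∫ t in Ioi (0 : ℝ), Real.sin (a * t ^ 2) ^ 2 * Real.exp (-(ε * t ^ 2)) =
      √π / 4 * ((ε : ℂ) ^ (-(1 / 2) : ℂ) - ((ε : ℂ) - 2 * a * I) ^ (-(1 / 2) : ℂ)).re := by
  set b : ℂ := (ε : ℂ) - 2 * a * I
  have hε' : 0 < (ε : ℂ).re := by simpa using hε
  have hb_re : b.re = ε := by simp [b]
  have hb_im : b.im = -(2 * a) := by simp [b]
  have hb : 0 < b.re := hb_re ▸ hε
  -- `sin² x = (1 - cos 2x) / 2`, and `cos (2 a t²) e^(-ε t²)` is the real part of `e^(-b t²)`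
  have hpt : ∀ t : ℝ, Real.sin (a * t ^ 2) ^ 2 * Real.exp (-(ε * t ^ 2)) =
      ((Complex.exp (-(ε : ℂ) * t ^ 2) - Complex.exp (-b * t ^ 2)) / 2).re := by
    intro t
    have h1 : (Complex.exp (-(ε : ℂ) * t ^ 2)).re = Real.exp (-(ε * t ^ 2)) := by
      rw [← ofReal_pow, ← ofReal_neg, ← ofReal_mul, ← ofReal_exp, ofReal_re, neg_mul]
    have h2 : (Complex.exp (-b * t ^ 2)).re =
        Real.exp (-(ε * t ^ 2)) * Real.cos (2 * (a * t ^ 2)) := by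
      rw [Complex.exp_re, ← ofReal_pow, re_mul_ofReal, im_mul_ofReal, neg_re, neg_im, hb_re, hb_im]
      ring_nf
    rw [Complex.div_ofNat_re, sub_re, h1, h2, Real.cos_two_mul, Real.cos_sq']
    ring
  have hint : Integrable (fun t : ℝ => (Complex.exp (-(ε : ℂ) * t ^ 2) -
      Complex.exp (-b * t ^ 2)) / 2) (volume.restrict (Ioi 0)) :=
    (((integrable_cexp_neg_mul_sq hε').sub (integrable_cexp_neg_mul_sq hb)).div_const _)
      |>.integrableOn
  have hcplx : ∫ t in Ioi (0 : ℝ), (Complex.exp (-(ε : ℂ) * t ^ 2) -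
      Complex.exp (-b * t ^ 2)) / 2 =
        ((√π / 4 : ℝ) : ℂ) * ((ε : ℂ) ^ (-(1 / 2) : ℂ) - b ^ (-(1 / 2) : ℂ)) := by
    rw [integral_div, integral_sub (integrable_cexp_neg_mul_sq hε').integrableOn
      (integrable_cexp_neg_mul_sq hb).integrableOn, integral_gaussian_complex_Ioi hε',
      integral_gaussian_complex_Ioi hb, ofReal_div_cpow pi_pos (ofReal_mem_slitPlane.mpr hε),
      ofReal_div_cpow pi_pos (mem_slitPlane_iff.mpr (Or.inl hb)), cpow_half_ofReal pi_pos.le]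
    push_cast
    ring
  simp_rw [hpt]
  have := integral_re hint
  simp only [RCLike.re_to_complex] at this
  rw [this, hcplx, re_ofReal_mul]

section Primitive

def sinSqGaussianPrimitive (a ε : ℝ) : ℝ :=
  √π / 2 * ((ε : ℂ) ^ (1 / 2 : ℂ) - ((ε : ℂ) - 2 * a * I) ^ (1 / 2 : ℂ)).re

variable {a : ℝ}

lemma hasDerivAt_sinSqGaussianPrimitive {ε : ℝ} (hε : 0 < ε) :
    HasDerivAt (sinSqGaussianPrimitive a)
      (√π / 4 * ((ε : ℂ) ^ (-(1 / 2) : ℂ) - ((ε : ℂ) - 2 * a * I) ^ (-(1 / 2) : ℂ)).re) ε := by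
  have h₁ := (hasDerivAt_id (ε : ℂ)).cpow_const (c := 1 / 2) (ofReal_mem_slitPlane.mpr hε)
  have h₂ := ((hasDerivAt_id (ε : ℂ)).sub_const (2 * a * I)).cpow_const (c := 1 / 2)
    (mem_slitPlane_iff.mpr (Or.inl (by simpa using hε)))
  have h := ((h₁.sub h₂).real_of_complex).const_mul (√π / 2)
  refine h.congr_deriv ?_
  norm_num [mul_sub, ← mul_assoc]
  ring

lemma continuousAt_sinSqGaussianPrimitive_zero (ha : a ≠ 0) :
    ContinuousAt (sinSqGaussianPrimitive a) 0 := by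
  have h₁ : ContinuousAt (fun x : ℂ => x ^ (1 / 2 : ℂ)) ((0 : ℝ) : ℂ) :=
    continuousAt_cpow_const_of_re_pos (Or.inl le_rfl) (by norm_num)
  have h₂ : ContinuousAt (fun x : ℂ => x ^ (1 / 2 : ℂ)) ((0 : ℝ) - 2 * a * I) :=
    continuousAt_cpow_const (mem_slitPlane_iff.mpr (Or.inr (by simpa using ha)))
  unfold sinSqGaussianPrimitive
  refine continuousAt_const.mul (Complex.continuous_re.continuousAt.comp (ContinuousAt.sub ?_ ?_))
  · exact h₁.comp continuous_ofReal.continuousAt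
  · exact ContinuousAt.comp (g := fun x : ℂ => x ^ (1 / 2 : ℂ))
      (f := fun x : ℝ => (x : ℂ) - 2 * a * I) h₂ (by fun_prop)

lemma tendsto_sinSqGaussianPrimitive_atTop :
    Tendsto (sinSqGaussianPrimitive a) atTop (𝓝 0) := by
  have hbound : ∀ ε > 0, |sinSqGaussianPrimitive a ε| ≤ √π * |a| * (√ε)⁻¹ := by
    intro ε hε
    have hsε : 0 < √ε := Real.sqrt_pos.mpr hε
    have h := norm_cpow_half_sub_mul_le (ε : ℂ) ((ε : ℂ) - 2 * a * I)
    have hq := re_cpow_half_nonneg ((ε : ℂ) - 2 * a * I)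
    have hnorm : ‖(ε : ℂ) - ((ε : ℂ) - 2 * a * I)‖ = 2 * |a| := by simp
    rw [cpow_half_ofReal hε.le, ofReal_re, hnorm] at h
    rw [sinSqGaussianPrimitive, cpow_half_ofReal hε.le, abs_mul, abs_of_pos (by positivity),
      le_mul_inv_iff₀ hsε]
    set d := (√ε : ℂ) - ((ε : ℂ) - 2 * a * I) ^ (1 / 2 : ℂ)
    have hd : |d.re| * √ε ≤ 2 * |a| := by
      nlinarith [norm_nonneg d, abs_re_le_norm d]
    nlinarith [Real.sqrt_nonneg π]
  have hlim : Tendsto (fun ε : ℝ => √π * |a| * (√ε)⁻¹) atTop (𝓝 0) := by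
    simpa using (tendsto_inv_atTop_zero.comp Real.tendsto_sqrt_atTop).const_mul (√π * |a|)
  exact squeeze_zero_norm' (eventually_gt_atTop 0 |>.mono hbound) hlim

lemma sinSqGaussianPrimitive_zero (ha : 0 ≤ a) :
    sinSqGaussianPrimitive a 0 = -(√π * √a / 2) := by
  simp only [sinSqGaussianPrimitive, ofReal_zero, zero_sub]
  rw [zero_cpow (by norm_num), zero_sub, neg_re, re_cpow_half_neg_mul_I ha]
  ring

end Primitive

lemma sin_sq_div_sq_le (a t : ℝ) :
    Real.sin (a * t ^ 2) ^ 2 / t ^ 2 ≤ (|a| + 1) * (1 + t ^ 2)⁻¹ := by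
  rcases eq_or_ne t 0 with rfl | ht
  · rw [zero_pow two_ne_zero, div_zero]; positivity
  have ht2 : 0 < t ^ 2 := by positivity
  -- `sin² x ≤ |sin x| ≤ |x|` controls `t` near `0`, and `sin² x ≤ 1` controls the tail
  have hsmall : Real.sin (a * t ^ 2) ^ 2 ≤ |a| * t ^ 2 := by
    calc Real.sin (a * t ^ 2) ^ 2 ≤ |Real.sin (a * t ^ 2)| := by
          rw [← sq_abs]; exact pow_le_of_le_one (abs_nonneg _) (Real.abs_sin_le_one _) two_ne_zero
      _ ≤ |a * t ^ 2| := Real.abs_sin_le_abs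
      _ = |a| * t ^ 2 := by rw [abs_mul, abs_of_pos ht2]
  rw [div_le_iff₀ ht2, mul_assoc, ← div_eq_inv_mul, mul_div_assoc', le_div_iff₀ (by positivity)]
  nlinarith [Real.sin_sq_le_one (a * t ^ 2)]

lemma integrable_sin_sq_div_sq (a : ℝ) :
    Integrable (fun t : ℝ => Real.sin (a * t ^ 2) ^ 2 / t ^ 2) := by
  refine (integrable_inv_one_add_sq.const_mul (|a| + 1)).mono'
    (by fun_prop : Measurable _).aestronglyMeasurable ?_
  filter_upwards with t
  rw [Real.norm_of_nonneg (by positivity)]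
  exact sin_sq_div_sq_le a t

lemma integral_exp_neg_mul_Ioi {c : ℝ} (hc : 0 < c) :
    ∫ x in Ioi (0 : ℝ), Real.exp (-(x * c)) = c⁻¹ := by
  simp_rw [show ∀ x, -(x * c) = -c * x from fun x => by ring]
  rw [integral_exp_mul_Ioi (neg_lt_zero.mpr hc), mul_zero, Real.exp_zero]
  field_simp

theorem integral_sin_sq_div_sq_Ioi {a : ℝ} (ha : 0 < a) :
    ∫ t in Ioi (0 : ℝ), Real.sin (a * t ^ 2) ^ 2 / t ^ 2 = √(π * a) / 2 := by
  set K : ℝ → ℝ → ℝ := fun t ε => Real.sin (a * t ^ 2) ^ 2 * Real.exp (-(ε * t ^ 2))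
  have hK_nonneg : ∀ t ε, 0 ≤ K t ε := fun _ _ => by positivity
  have hK_inner : ∀ t ≠ 0, ∫ ε in Ioi (0 : ℝ), K t ε = Real.sin (a * t ^ 2) ^ 2 / t ^ 2 := by
    intro t ht
    simp only [K, integral_const_mul, integral_exp_neg_mul_Ioi (by positivity : 0 < t ^ 2),
      div_eq_mul_inv]
  have hK_int : Integrable (Function.uncurry K)
      ((volume.restrict (Ioi 0)).prod (volume.restrict (Ioi 0))) := by
    rw [integrable_prod_iff (by fun_prop : Continuous (Function.uncurry K)).aestronglyMeasurable]
    constructor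
    · filter_upwards [ae_restrict_mem measurableSet_Ioi] with t ht
      refine IntegrableOn.congr_fun ((integrableOn_exp_mul_Ioi
        (neg_lt_zero.mpr (pow_pos ht 2)) 0).const_mul (Real.sin (a * t ^ 2) ^ 2))
        (fun ε _ => ?_) measurableSet_Ioi
      simp only [K, Function.uncurry_apply_pair, neg_mul, mul_comm ε]
    · refine (integrable_sin_sq_div_sq a).integrableOn.congr_fun (fun t ht => ?_) measurableSet_Ioi
      simp only [Function.uncurry_apply_pair, Real.norm_of_nonneg (hK_nonneg _ _)]
      exact (hK_inner t (ne_of_gt ht)).symm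
  calc ∫ t in Ioi (0 : ℝ), Real.sin (a * t ^ 2) ^ 2 / t ^ 2
      = ∫ t in Ioi (0 : ℝ), ∫ ε in Ioi (0 : ℝ), K t ε :=
        setIntegral_congr_fun measurableSet_Ioi fun t ht => (hK_inner t (ne_of_gt ht)).symm
    _ = ∫ ε in Ioi (0 : ℝ), ∫ t in Ioi (0 : ℝ), K t ε := integral_integral_swap hK_int
    _ = 0 - sinSqGaussianPrimitive a 0 := by
        refine integral_Ioi_of_hasDerivAt_of_nonneg
          (continuousAt_sinSqGaussianPrimitive_zero ha.ne').continuousWithinAt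
          (fun ε hε => ?_)
          (fun ε _ => setIntegral_nonneg measurableSet_Ioi fun t _ => hK_nonneg t ε)
          tendsto_sinSqGaussianPrimitive_atTop
        rw [integral_sin_sq_mul_gaussian_Ioi a hε]
        exact hasDerivAt_sinSqGaussianPrimitive hε
    _ = √(π * a) / 2 := by
        rw [sinSqGaussianPrimitive_zero ha.le, Real.sqrt_mul pi_pos.le]
        ring

section RiemannSum

def riemannStep (g : ℝ → ℝ) (h : ℝ) (N : ℕ) (t : ℝ) : ℝ :=
  ∑ u ∈ Finset.Icc 1 N, (Ioc (((u : ℝ) - 1) * h) (u * h)).indicator (fun _ => g (u * h)) t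

variable {g : ℝ → ℝ} {h : ℝ} {N : ℕ}

lemma integrable_riemannStep (g : ℝ → ℝ) (h : ℝ) (N : ℕ) : Integrable (riemannStep g h N) :=
  integrable_finsetSum _ fun _ _ =>
    (integrable_indicator_iff measurableSet_Ioc).mpr (integrableOn_const measure_Ioc_lt_top.ne)

lemma integral_riemannStep (hh : 0 ≤ h) :
    ∫ t, riemannStep g h N t = h * ∑ u ∈ Finset.Icc 1 N, g (u * h) := by
  unfold riemannStep
  rw [integral_finsetSum _ fun _ _ =>
    (integrable_indicator_iff measurableSet_Ioc).mpr (integrableOn_const measure_Ioc_lt_top.ne),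
    Finset.mul_sum]
  refine Finset.sum_congr rfl fun u _ => ?_
  rw [integral_indicator_const _ measurableSet_Ioc, measureReal_def, Real.volume_Ioc,
    ENNReal.toReal_ofReal (by nlinarith), smul_eq_mul]
  ring

lemma riemannStep_of_nonpos (hh : 0 ≤ h) {t : ℝ} (ht : t ≤ 0) : riemannStep g h N t = 0 := by
  refine Finset.sum_eq_zero fun u hu => indicator_of_notMem (fun hmem => ?_) _
  have hu1 : (1 : ℝ) ≤ u := by exact_mod_cast (Finset.mem_Icc.mp hu).1
  nlinarith [hmem.1]

lemma riemannStep_of_pos (hh : 0 < h) {t : ℝ} (ht : 0 < t) :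
    riemannStep g h N t = if ⌈t / h⌉₊ ≤ N then g (⌈t / h⌉₊ * h) else 0 := by
  have hmem : ∀ u ∈ Finset.Icc 1 N, t ∈ Ioc (((u : ℝ) - 1) * h) (u * h) ↔ ⌈t / h⌉₊ = u := by
    intro u hu
    rw [Nat.ceil_eq_iff (by have := (Finset.mem_Icc.mp hu).1; omega), mem_Ioc, lt_div_iff₀ hh,
      div_le_iff₀ hh, Nat.cast_sub (Finset.mem_Icc.mp hu).1, Nat.cast_one]
  unfold riemannStep
  rw [Finset.sum_congr rfl fun u hu => by rw [indicator_apply, if_congr (hmem u hu) rfl rfl],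
    Finset.sum_ite_eq]
  have h1 : 1 ≤ ⌈t / h⌉₊ := Nat.one_le_iff_ne_zero.mpr (Nat.ceil_pos.mpr (div_pos ht hh)).ne'
  simp only [Finset.mem_Icc, h1, true_and]

lemma ceil_div_mul_mem_Ico (hh : 0 < h) {t : ℝ} (ht : 0 ≤ t) :
    (⌈t / h⌉₊ : ℝ) * h ∈ Ico t (t + h) := by
  constructor
  · rw [← div_le_iff₀ hh]; exact Nat.le_ceil _
  · rw [← lt_div_iff₀ hh, add_div, div_self hh.ne']
    exact Nat.ceil_lt_add_one (div_nonneg ht hh.le)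

end RiemannSum

section RiemannSumLimit

variable {g b : ℝ → ℝ}

lemma abs_riemannStep_le_indicator (hb_anti : AntitoneOn b (Ioi 0))
    (hgb : ∀ t ∈ Ioi (0 : ℝ), |g t| ≤ b t) {h : ℝ} (hh : 0 < h) (N : ℕ) (t : ℝ) :
    |riemannStep g h N t| ≤ (Ioi 0).indicator b t := by
  rcases le_or_gt t 0 with ht | ht
  · rw [riemannStep_of_nonpos hh.le ht, indicator_of_notMem (notMem_Ioi.mpr ht), abs_zero]
  rw [riemannStep_of_pos hh ht, indicator_of_mem (mem_Ioi.mpr ht)]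
  have hs := ceil_div_mul_mem_Ico hh ht.le
  split_ifs
  · exact (hgb _ (ht.trans_le hs.1)).trans (hb_anti ht (ht.trans_le hs.1) hs.1)
  · simpa using (abs_nonneg _).trans (hgb t ht)

lemma tendsto_riemannStep {ι : Type*} {l : Filter ι} (hg : ContinuousOn g (Ioi 0)) {h : ι → ℝ}
    {N : ι → ℕ} (hh : Tendsto h l (𝓝[>] 0)) (hN : Tendsto (fun i => N i * h i) l atTop) (t : ℝ) :
    Tendsto (fun i => riemannStep g (h i) (N i) t) l (𝓝 ((Ioi 0).indicator g t)) := by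
  have hpos : ∀ᶠ i in l, 0 < h i := hh.eventually self_mem_nhdsWithin
  rcases le_or_gt t 0 with ht | ht
  · rw [indicator_of_notMem (notMem_Ioi.mpr ht)]
    exact tendsto_const_nhds.congr' (hpos.mono fun i hi => (riemannStep_of_nonpos hi.le ht).symm)
  rw [indicator_of_mem (mem_Ioi.mpr ht)]
  have h0 : Tendsto h l (𝓝 0) := tendsto_nhds_of_tendsto_nhdsWithin hh
  have hnode : Tendsto (fun i => (⌈t / h i⌉₊ : ℝ) * h i) l (𝓝 t) := by
    refine tendsto_of_tendsto_of_tendsto_of_le_of_le' tendsto_const_nhds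
      (by simpa using h0.const_add t) ?_ ?_
    · exact hpos.mono fun i hi => (ceil_div_mul_mem_Ico hi ht.le).1
    · exact hpos.mono fun i hi => (ceil_div_mul_mem_Ico hi ht.le).2.le
  refine ((hg.continuousAt (Ioi_mem_nhds ht)).tendsto.comp hnode).congr' ?_
  filter_upwards [hpos, hN.eventually_ge_atTop (t + 1), h0.eventually (gt_mem_nhds one_pos)]
    with i hi hNi h1
  have hlt : (⌈t / h i⌉₊ : ℝ) * h i < N i * h i := by
    linarith [(ceil_div_mul_mem_Ico hi ht.le).2]
  rw [Function.comp_apply, riemannStep_of_pos hi ht,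
    if_pos (by exact_mod_cast (lt_of_mul_lt_mul_right hlt hi.le).le)]

theorem tendsto_mul_sum_Icc_integral_Ioi {ι : Type*} {l : Filter ι} [l.IsCountablyGenerated]
    (hg : ContinuousOn g (Ioi 0)) (hb : IntegrableOn b (Ioi 0)) (hb_anti : AntitoneOn b (Ioi 0))
    (hgb : ∀ t ∈ Ioi (0 : ℝ), |g t| ≤ b t) {h : ι → ℝ} {N : ι → ℕ} (hh : Tendsto h l (𝓝[>] 0))
    (hN : Tendsto (fun i => N i * h i) l atTop) :
    Tendsto (fun i => h i * ∑ u ∈ Finset.Icc 1 (N i), g (u * h i)) l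
      (𝓝 (∫ t in Ioi 0, g t)) := by
  have hpos : ∀ᶠ i in l, 0 < h i := hh.eventually self_mem_nhdsWithin
  have hlim := tendsto_integral_filter_of_dominated_convergence ((Ioi 0).indicator b)
    (Eventually.of_forall fun i => (integrable_riemannStep g (h i) (N i)).aestronglyMeasurable)
    (hpos.mono fun i hi => ae_of_all _ (abs_riemannStep_le_indicator hb_anti hgb hi (N i)))
    (hb.integrable_indicator measurableSet_Ioi) (ae_of_all _ (tendsto_riemannStep hg hh hN))
  rw [integral_indicator measurableSet_Ioi] at hlim
  exact hlim.congr' (hpos.mono fun i hi => integral_riemannStep hi.le)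

end RiemannSumLimit

def chuProfile (t : ℝ) : ℝ := (Real.sin (π * t ^ 2) / (π * t)) ^ 2

lemma chuProfile_eq (t : ℝ) : chuProfile t = Real.sin (π * t ^ 2) ^ 2 / t ^ 2 / π ^ 2 := by
  rw [chuProfile, div_pow, mul_pow, div_div, mul_comm (π ^ 2)]

lemma integral_chuProfile : ∫ t in Ioi (0 : ℝ), chuProfile t = 1 / (2 * π) := by
  simp_rw [chuProfile_eq]
  rw [integral_div, integral_sin_sq_div_sq_Ioi pi_pos, Real.sqrt_mul_self pi_pos.le]
  field_simp

lemma abs_chuProfile_le (t : ℝ) : |chuProfile t| ≤ (π + 1) / π ^ 2 * (1 + t ^ 2)⁻¹ := by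
  rw [abs_of_nonneg (sq_nonneg _), chuProfile_eq, div_le_iff₀ (by positivity)]
  have := sin_sq_div_sq_le π t
  rw [abs_of_pos pi_pos] at this
  calc _ ≤ (π + 1) * (1 + t ^ 2)⁻¹ := this
    _ = _ := by field_simp

lemma continuousOn_chuProfile : ContinuousOn chuProfile (Ioi 0) := fun t ht =>
  ((Real.continuous_sin.comp (by fun_prop)).continuousAt.div (by fun_prop)
    (mul_pos pi_pos ht).ne').pow 2 |>.continuousWithinAt

lemma antitoneOn_inv_one_add_sq : AntitoneOn (fun t : ℝ => (1 + t ^ 2)⁻¹) (Ioi 0) :=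
  fun s hs t _ hst => by
    exact inv_anti₀ (by positivity) (by gcongr; exact hs.le)

lemma rpow_mul_sum_eq_riemannSum (n : ℕ) :
    (n : ℝ) ^ (-(3 / 2 : ℝ)) * ∑ u ∈ Finset.Icc 1 (n / 2),
        (Real.sin (π * u ^ 2 / n) / (π * u / n)) ^ 2 =
      (√n)⁻¹ * ∑ u ∈ Finset.Icc 1 (n / 2), chuProfile (u * (√n)⁻¹) := by
  set s := √(n : ℝ)
  have hsq : (n : ℝ) = s ^ 2 := (Real.sq_sqrt (Nat.cast_nonneg n)).symm
  have hrpow : (n : ℝ) ^ (-(3 / 2 : ℝ)) = s⁻¹ * (s ^ 2)⁻¹ := by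
    rw [Real.rpow_neg (Nat.cast_nonneg n), show (3 / 2 : ℝ) = (1 / 2) * (3 : ℕ) by norm_num,
      Real.rpow_mul (Nat.cast_nonneg n), Real.rpow_natCast, ← Real.sqrt_eq_rpow]
    ring
  rw [hrpow, mul_assoc]
  congr 1
  rw [Finset.mul_sum]
  refine Finset.sum_congr rfl fun u _ => ?_
  rw [chuProfile, hsq]
  field_simp

lemma tendsto_inv_sqrt_natCast_nhdsGT_zero :
    Tendsto (fun n : ℕ => (√(n : ℝ))⁻¹) atTop (𝓝[>] 0) :=
  tendsto_nhdsWithin_iff.mpr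
    ⟨tendsto_inv_atTop_zero.comp (Real.tendsto_sqrt_atTop.comp tendsto_natCast_atTop_atTop),
      (eventually_ge_atTop 1).mono fun n hn => by
        simpa using Real.sqrt_pos.mpr (by exact_mod_cast hn : (0 : ℝ) < n)⟩

lemma tendsto_natCast_div_two_mul_inv_sqrt_atTop :
    Tendsto (fun n : ℕ => ((n / 2 : ℕ) : ℝ) * (√(n : ℝ))⁻¹) atTop atTop := by
  have hlow : Tendsto (fun n : ℕ => (√(n : ℝ) - 1) / 2) atTop atTop :=
    (tendsto_atTop_add_const_right _ (-1)
      (Real.tendsto_sqrt_atTop.comp tendsto_natCast_atTop_atTop)).atTop_div_const two_pos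
  refine tendsto_atTop_mono' _ ((eventually_ge_atTop 1).mono fun n hn => ?_) hlow
  have hs1 : 1 ≤ √(n : ℝ) := Real.one_le_sqrt.mpr (by exact_mod_cast hn)
  have hsq : √(n : ℝ) ^ 2 = n := Real.sq_sqrt (Nat.cast_nonneg n)
  have hhalf : (n : ℝ) ≤ 2 * ((n / 2 : ℕ) : ℝ) + 1 := by
    exact_mod_cast (by omega : n ≤ 2 * (n / 2) + 1)
  show _ ≤ _ * _
  rw [← div_eq_mul_inv, le_div_iff₀ (by positivity)]
  nlinarith

/-- the limit of n^(-3/2) * sum over 1 <= u <= n/2 of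
(sin(pi u^2/n) / (pi u/n))^2 is 1/(2 pi). -/
theorem chu_sum_linear_tendsto :
    Tendsto (fun n : ℕ => (n : ℝ) ^ (-(3 / 2 : ℝ)) *
        ∑ u ∈ Finset.Icc 1 (n / 2),
          (Real.sin (Real.pi * u ^ 2 / n) / (Real.pi * u / n)) ^ 2)
      atTop (𝓝 (1 / (2 * Real.pi))) := by
  have hb : IntegrableOn (fun t : ℝ => (π + 1) / π ^ 2 * (1 + t ^ 2)⁻¹) (Ioi 0) :=
    (integrable_inv_one_add_sq.const_mul _).integrableOn
  have hb_anti : AntitoneOn (fun t : ℝ => (π + 1) / π ^ 2 * (1 + t ^ 2)⁻¹) (Ioi 0) :=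
    fun s hs t ht hst => mul_le_mul_of_nonneg_left (antitoneOn_inv_one_add_sq hs ht hst)
      (by positivity)
  have hlim := tendsto_mul_sum_Icc_integral_Ioi continuousOn_chuProfile hb hb_anti
    (fun t _ => abs_chuProfile_le t) tendsto_inv_sqrt_natCast_nhdsGT_zero
    tendsto_natCast_div_two_mul_inv_sqrt_atTop
  rw [integral_chuProfile] at hlim
  exact hlim.congr fun n => (rpow_mul_sum_eq_riemannSum n).symm
end
end

section
/- The limit as m tends to infinity of (1/m²) · Σ_{v=1}^{m} ( cos(π(2v−1)²/(4m)) / cos(π(2v−1)/(4m)) )² equals 2. -/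
open Complex Real Filter Topology

noncomputable section

/-!
Substituting `v = m - k` turns the `v`-th term into
`cos²(π(2k+1)²/(4m)) / sin²(π(2k+1)/(4m))`: the argument of the numerator only moves by an
integer multiple of `π`. Divided by `m²`, the `k`-th term tends to `16 / (π²(2k+1)²)` and, by
Jordan's inequality `sin y ≥ 2y/π`, is bounded by `4 / (2k+1)²`. Tannery's theorem then gives the
limit `16/π² · ∑ 1/(2k+1)² = 16/π² · π²/8 = 2`.
-/

open Finset

theorem tendsto_sum_range_of_dominated_convergence {G : Type*} [NormedAddCommGroup G]
    [CompleteSpace G] {f : ℕ → ℕ → G} {g : ℕ → G} {bound : ℕ → ℝ} (h_sum : Summable bound)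
    (hab : ∀ k, Tendsto (f · k) atTop (𝓝 (g k))) (h_bound : ∀ m, ∀ k < m, ‖f m k‖ ≤ bound k) :
    Tendsto (fun m => ∑ k ∈ range m, f m k) atTop (𝓝 (∑' k, g k)) := by
  let F : ℕ → ℕ → G := fun m k => if k < m then f m k else 0
  have hF (m : ℕ) : ∑ k ∈ range m, f m k = ∑' k, F m k := by
    rw [tsum_eq_sum (s := range m) fun k hk => if_neg (by simpa using hk)]
    exact sum_congr rfl fun k hk => (if_pos (mem_range.1 hk)).symm
  simp_rw [hF]
  refine tendsto_tsum_of_dominated_convergence h_sum (fun k => ?_) (.of_forall fun m k => ?_)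
  · refine (hab k).congr' ?_
    filter_upwards [eventually_gt_atTop k] with m hm
    simp [F, hm]
  · by_cases hk : k < m
    · simpa [F, hk] using h_bound m k hk
    · simpa [F, hk] using (norm_nonneg _).trans (h_bound (k + 1) k k.lt_succ_self)

theorem hasSum_one_div_two_mul_add_one_sq :
    HasSum (fun k : ℕ => 1 / (2 * k + 1 : ℝ) ^ 2) (π ^ 2 / 8) := by
  have h_even : HasSum (fun k : ℕ => 1 / ((2 * k : ℕ) : ℝ) ^ 2) (1 / 4 * (π ^ 2 / 6)) := by
    refine (hasSum_zeta_two.mul_left (1 / 4)).congr_fun fun k => ?_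
    push_cast
    ring
  have h_odd : Summable fun k : ℕ => 1 / ((2 * k + 1 : ℕ) : ℝ) ^ 2 :=
    hasSum_zeta_two.summable.comp_injective fun a b h => by omega
  have h_sum := (HasSum.even_add_odd (f := fun n : ℕ => 1 / (n : ℝ) ^ 2) h_even
    h_odd.hasSum).unique hasSum_zeta_two
  push_cast at h_odd h_sum
  convert h_odd.hasSum using 1
  linarith

theorem tsum_one_div_pi_mul_two_mul_add_one_div_four_sq :
    ∑' k : ℕ, 1 / (π * (2 * k + 1) / 4) ^ 2 = 2 := by
  refine ((hasSum_one_div_two_mul_add_one_sq.mul_left (16 / π ^ 2)).congr_fun fun k => ?_)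
    |>.tsum_eq.trans ?_
  · field_simp
    ring
  · field_simp
    ring

theorem cos_sq_add_int_mul_pi (x : ℝ) (n : ℤ) : Real.cos (x + n * π) ^ 2 = Real.cos x ^ 2 := by
  rw [Real.cos_add_int_mul_pi, mul_pow, ← sq_abs ((-1 : ℝ) ^ n), abs_neg_one_zpow, one_pow,
    one_mul]

theorem cos_pi_mul_two_mul_sub_div_four_mul {m : ℝ} (hm : m ≠ 0) (a : ℝ) :
    Real.cos (π * (2 * m - a) / (4 * m)) = Real.sin (π * a / (4 * m)) := by
  rw [← Real.cos_pi_div_two_sub]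
  congr 1
  field_simp
  ring

theorem cos_sq_pi_mul_two_mul_sub_sq_div_four_mul {m : ℤ} (hm : m ≠ 0) (a : ℤ) :
    Real.cos (π * (2 * m - a) ^ 2 / (4 * m)) ^ 2 = Real.cos (π * a ^ 2 / (4 * m)) ^ 2 := by
  have hm' : (m : ℝ) ≠ 0 := by exact_mod_cast hm
  rw [← cos_sq_add_int_mul_pi (π * a ^ 2 / (4 * m)) (m - a)]
  congr 2
  push_cast
  field_simp
  ring

theorem sum_Icc_one_eq_sum_range_sub {M : Type*} [AddCommMonoid M] (m : ℕ) (h : ℕ → M) :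
    ∑ v ∈ Icc 1 m, h v = ∑ k ∈ range m, h (m - k) := by
  refine sum_nbij' (fun v => m - v) (fun k => m - k) ?_ ?_ ?_ ?_ ?_
  all_goals intro a ha
  all_goals simp only [mem_Icc, mem_range] at ha ⊢
  all_goals try omega
  exact congrArg h (by omega)

theorem sum_Icc_cos_sq_div_cos_sq_eq_sum_range (m : ℕ) :
    ∑ v ∈ Icc 1 m, (Real.cos (π * (2 * v - 1) ^ 2 / (4 * m)) /
        Real.cos (π * (2 * v - 1) / (4 * m))) ^ 2 =
      ∑ k ∈ range m, Real.cos (π * (2 * k + 1) ^ 2 / (4 * m)) ^ 2 /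
        Real.sin (π * (2 * k + 1) / (4 * m)) ^ 2 := by
  rw [sum_Icc_one_eq_sum_range_sub]
  refine sum_congr rfl fun k hk => ?_
  have hk : k < m := mem_range.1 hk
  have hm : m ≠ 0 := by omega
  have hv : (2 * ((m - k : ℕ) : ℝ) - 1) = 2 * m - (2 * k + 1) := by
    rw [Nat.cast_sub hk.le]
    ring
  have h_num := cos_sq_pi_mul_two_mul_sub_sq_div_four_mul (Int.natCast_ne_zero.2 hm) (2 * k + 1)
  push_cast at h_num
  rw [div_pow, hv, h_num, cos_pi_mul_two_mul_sub_div_four_mul (Nat.cast_ne_zero.2 hm)]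

theorem tendsto_natCast_mul_sin_div (c : ℝ) :
    Tendsto (fun m : ℕ => m * Real.sin (c / m)) atTop (𝓝 c) := by
  have h_sinc := (continuous_sinc.tendsto 0).comp (tendsto_const_div_atTop_nhds_zero_nat c)
  rw [Function.comp_def, sinc_zero] at h_sinc
  refine (mul_one c ▸ h_sinc.const_mul c).congr' ?_
  filter_upwards [eventually_ne_atTop 0] with m hm
  rcases eq_or_ne c 0 with rfl | hc
  · simp
  · rw [sinc_of_ne_zero (by positivity)]
    field_simp

theorem tendsto_cos_sq_div_div_mul_sin_div_sq (b : ℝ) {c : ℝ} (hc : c ≠ 0) :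
    Tendsto (fun m : ℕ => Real.cos (b / m) ^ 2 / (m * Real.sin (c / m)) ^ 2) atTop
      (𝓝 (1 / c ^ 2)) := by
  have h_cos := (Real.continuous_cos.tendsto 0).comp (tendsto_const_div_atTop_nhds_zero_nat b)
  rw [Function.comp_def, Real.cos_zero] at h_cos
  have h := (h_cos.pow 2).div ((tendsto_natCast_mul_sin_div c).pow 2) (pow_ne_zero 2 hc)
  rwa [one_pow] at h

theorem cos_sq_div_mul_sin_sq_le {m a : ℝ} (ha : 0 < a) (ham : a ≤ 2 * m) (x : ℝ) :
    Real.cos x ^ 2 / (m * Real.sin (π * a / (4 * m))) ^ 2 ≤ 4 / a ^ 2 := by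
  have hm : 0 < m := by linarith
  have h_jordan := Real.mul_le_sin (x := π * a / (4 * m)) (by positivity) (by
    rw [div_le_div_iff₀ (by positivity) two_pos]
    nlinarith [pi_pos])
  have h_sin : a / 2 ≤ m * Real.sin (π * a / (4 * m)) :=
    calc a / 2 = m * (2 / π * (π * a / (4 * m))) := by field_simp; ring
      _ ≤ m * Real.sin (π * a / (4 * m)) := by gcongr
  calc _ ≤ 1 / (a / 2) ^ 2 := div_le_div₀ zero_le_one (Real.cos_sq_le_one x) (by positivity)
        (pow_le_pow_left₀ (by positivity) h_sin 2)
    _ = 4 / a ^ 2 := by field_simp; ring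

/-- the limit of (1/m^2) * sum over v=1..m of
(cos(pi (2v-1)^2/(4m)) / cos(pi (2v-1)/(4m)))^2 is 2. -/
theorem cos_sum_tendsto :
    Tendsto (fun m : ℕ => 1 / (m : ℝ) ^ 2 *
        ∑ v ∈ Finset.Icc 1 m,
          (Real.cos (Real.pi * (2 * v - 1) ^ 2 / (4 * m)) /
            Real.cos (Real.pi * (2 * v - 1) / (4 * m))) ^ 2)
      atTop (𝓝 2) := by
  have h_lim : Tendsto (fun m : ℕ => ∑ k ∈ range m, Real.cos (π * (2 * k + 1) ^ 2 / (4 * m)) ^ 2 /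
      (m * Real.sin (π * (2 * k + 1) / (4 * m))) ^ 2) atTop
      (𝓝 (∑' k : ℕ, 1 / (π * (2 * k + 1) / 4) ^ 2)) := by
    refine tendsto_sum_range_of_dominated_convergence
      (hasSum_one_div_two_mul_add_one_sq.summable.mul_left 4) (fun k => ?_) (fun m k hk => ?_)
    · have h := tendsto_cos_sq_div_div_mul_sin_div_sq (π * (2 * k + 1) ^ 2 / 4)
        (c := π * (2 * k + 1) / 4) (by positivity)
      simp only [div_div] at h
      exact h
    · rw [Real.norm_eq_abs, abs_of_nonneg (by positivity), mul_one_div]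
      exact cos_sq_div_mul_sin_sq_le (by positivity) (by norm_cast; omega) _
  rw [tsum_one_div_pi_mul_two_mul_add_one_div_four_sq] at h_lim
  refine h_lim.congr fun m => ?_
  rw [sum_Icc_cos_sq_div_cos_sq_eq_sum_range, mul_sum]
  exact sum_congr rfl fun k _ => by ring
end
end

section
/- The limit as m tends to infinity of (1/m²) · Σ_{u=1}^{m} ( sin(π m u²/(2m+1)) / sin(π m u/(2m+1)) )² equals 0. -/
open Complex Real Filter Topology

noncomputable section

/-! Put `θ = π m u / (2m+1)`. The numerator is `sin (u θ)`, so each term is at most `u²`.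
Since `2θ = uπ - πu/(2m+1)`, Jordan's inequality gives `|sin 2θ| ≥ 2u/(2m+1)`, hence
`|sin θ| ≥ u/(2m+1)` and each term is also at most `((2m+1)/u)²`. Using the first bound for
`u ≤ √m` and the second for `u > √m` (where `∑ u⁻² ≤ 2/√m`), the sum is `O(m^{3/2})`. -/

open Finset

theorem abs_sin_nat_mul_le (n : ℕ) (x : ℝ) : |Real.sin (n * x)| ≤ n * |Real.sin x| := by
  induction n with
  | zero => simp
  | succ n ih =>
    rw [Nat.cast_succ, add_mul, one_mul, Real.sin_add]
    calc |Real.sin (n * x) * Real.cos x + Real.cos (n * x) * Real.sin x|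
        ≤ |Real.sin (n * x)| * |Real.cos x| + |Real.cos (n * x)| * |Real.sin x| := by
          rw [← abs_mul, ← abs_mul]; exact abs_add_le _ _
      _ ≤ n * |Real.sin x| * 1 + 1 * |Real.sin x| := by
          gcongr
          exacts [Real.abs_cos_le_one x, Real.abs_cos_le_one _]
      _ = (n + 1) * |Real.sin x| := by ring

theorem sq_sin_nat_mul_div_sin_le (n : ℕ) (x : ℝ) :
    (Real.sin (n * x) / Real.sin x) ^ 2 ≤ (n : ℝ) ^ 2 := by
  rcases eq_or_ne (Real.sin x) 0 with hx | hx
  · simp [hx]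
  rw [div_pow, div_le_iff₀ (by positivity), ← mul_pow, sq_le_sq, abs_mul, Nat.abs_cast]
  exact abs_sin_nat_mul_le n x

theorem sq_sin_div_sin_le_inv_sq (y x : ℝ) :
    (Real.sin y / Real.sin x) ^ 2 ≤ (Real.sin x ^ 2)⁻¹ := by
  rw [div_pow, div_eq_mul_inv]
  exact mul_le_of_le_one_left (by positivity) (Real.sin_sq_le_one y)

theorem div_le_abs_sin_pi_mul_div (m u : ℕ) (hum : u ≤ m) :
    (u : ℝ) / (2 * m + 1) ≤ |Real.sin (π * m * u / (2 * m + 1))| := by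
  set θ := π * m * u / (2 * m + 1)
  set x := π * u / (2 * m + 1)
  have hx₀ : 0 ≤ x := by positivity
  have hx : x ≤ π / 2 := by
    rw [div_le_div_iff₀ (by positivity) two_pos]
    nlinarith [pi_pos, (Nat.cast_le (α := ℝ)).2 hum]
  have hdouble : |Real.sin ((2 : ℕ) * θ)| = |Real.sin x| := by
    have : ((2 : ℕ) : ℝ) * θ = u * π - x := by simp only [θ, x]; field_simp; ring
    rw [this, Real.sin_nat_mul_pi_sub]
    simp [abs_mul]
  calc (u : ℝ) / (2 * m + 1) = 1 / 2 * (2 / π * x) := by simp only [x]; field_simp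
    _ ≤ 1 / 2 * |Real.sin x| := by gcongr; exact (mul_le_sin hx₀ hx).trans (le_abs_self _)
    _ ≤ 1 / 2 * (2 * |Real.sin θ|) := by
        rw [← hdouble]; gcongr; exact_mod_cast abs_sin_nat_mul_le 2 θ
    _ = |Real.sin θ| := by ring

theorem sq_sin_div_sin_le (m u : ℕ) (hu : 1 ≤ u) (hum : u ≤ m) :
    (Real.sin (π * m * u ^ 2 / (2 * m + 1)) / Real.sin (π * m * u / (2 * m + 1))) ^ 2
      ≤ (u : ℝ) ^ 2 ∧
    (Real.sin (π * m * u ^ 2 / (2 * m + 1)) / Real.sin (π * m * u / (2 * m + 1))) ^ 2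
      ≤ ((2 * m + 1) / u) ^ 2 := by
  have hnum : π * m * u ^ 2 / (2 * m + 1) = u * (π * m * u / (2 * m + 1)) := by ring
  refine ⟨hnum ▸ sq_sin_nat_mul_div_sin_le u _, (sq_sin_div_sin_le_inv_sq _ _).trans ?_⟩
  have hu₀ : (0 : ℝ) < u := by exact_mod_cast hu
  calc (Real.sin (π * m * u / (2 * m + 1)) ^ 2)⁻¹ ≤ (((u : ℝ) / (2 * m + 1)) ^ 2)⁻¹ := by
        refine inv_anti₀ (by positivity) ?_
        rw [← sq_abs (Real.sin _)]
        gcongr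
        exact div_le_abs_sin_pi_mul_div m u hum
    _ = ((2 * m + 1 : ℝ) / u) ^ 2 := by rw [← inv_pow, inv_div]

theorem sum_Icc_le_of_le_sq_of_le_div_sq (f : ℕ → ℝ) (c : ℝ) (m K : ℕ)
    (hf : ∀ u ∈ Icc 1 m, f u ≤ (u : ℝ) ^ 2 ∧ f u ≤ (c / u) ^ 2) :
    ∑ u ∈ Icc 1 m, f u ≤ (K : ℝ) ^ 3 + 2 * c ^ 2 / (K + 1) := by
  rw [← sum_filter_add_sum_filter_not _ (· ≤ K)]
  gcongr ?_ + ?_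
  · have hcard : #{u ∈ Icc 1 m | u ≤ K} ≤ K := by
      simpa using card_le_card (s := {u ∈ Icc 1 m | u ≤ K}) (t := Icc 1 K)
        (fun u hu => by simp only [mem_filter, mem_Icc] at hu ⊢; omega)
    calc ∑ u ∈ Icc 1 m with u ≤ K, f u ≤ ∑ u ∈ Icc 1 m with u ≤ K, (K : ℝ) ^ 2 :=
          sum_le_sum fun u hu => by
            simp only [mem_filter] at hu
            exact (hf u hu.1).1.trans (by gcongr; exact hu.2)
      _ ≤ (K : ℝ) ^ 3 := by
          rw [sum_const, nsmul_eq_mul, pow_succ' (K : ℝ) 2]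
          gcongr
  · calc ∑ u ∈ Icc 1 m with ¬u ≤ K, f u ≤ ∑ u ∈ Ioo K (m + 1), (c / u) ^ 2 := by
          refine (sum_le_sum fun u hu => (hf u (mem_filter.1 hu).1).2).trans ?_
          refine sum_le_sum_of_subset_of_nonneg (fun u hu => ?_) fun _ _ _ => by positivity
          simp only [mem_filter, mem_Icc, mem_Ioo] at hu ⊢
          omega
      _ = c ^ 2 * ∑ u ∈ Ioo K (m + 1), ((u : ℝ) ^ 2)⁻¹ := by
          simp_rw [mul_sum, div_pow, div_eq_mul_inv]
      _ ≤ 2 * c ^ 2 / (K + 1) := by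
          rw [mul_comm 2, mul_div_assoc]
          gcongr
          exact sum_Ioo_inv_sq_le K (m + 1)

theorem tendsto_nat_sqrt_atTop : Tendsto Nat.sqrt atTop atTop :=
  tendsto_atTop_atTop.2 fun b => ⟨b * b, fun _ h => Nat.le_sqrt.2 h⟩

/-- the limit of (1/m^2) * sum over u=1..m of
(sin(pi m u^2/(2m+1)) / sin(pi m u/(2m+1)))^2 is 0. -/
theorem sin_sum_tendsto_zero :
    Tendsto (fun m : ℕ => 1 / (m : ℝ) ^ 2 *
        ∑ u ∈ Finset.Icc 1 m,
          (Real.sin (Real.pi * m * u ^ 2 / (2 * m + 1)) /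
            Real.sin (Real.pi * m * u / (2 * m + 1))) ^ 2)
      atTop (𝓝 0) := by
  refine squeeze_zero' (Eventually.of_forall fun m => by positivity) ?_
    ((tendsto_const_div_atTop_nhds_zero_nat 19).comp tendsto_nat_sqrt_atTop)
  filter_upwards [eventually_ge_atTop 1] with m hm
  set K := Nat.sqrt m
  have hKm : (K : ℝ) ^ 2 ≤ m := by exact_mod_cast Nat.sqrt_le' m
  have hsum := sum_Icc_le_of_le_sq_of_le_div_sq _ (2 * m + 1) m K
    fun u hu => sq_sin_div_sin_le m u (mem_Icc.1 hu).1 (mem_Icc.1 hu).2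
  have hm₁ : (1 : ℝ) ≤ m := by exact_mod_cast hm
  calc _ ≤ 1 / (m : ℝ) ^ 2 * ((K : ℝ) ^ 3 + 2 * (2 * m + 1) ^ 2 / (K + 1)) := by gcongr
    _ ≤ 19 / K := by
        rw [div_mul_eq_mul_div, one_mul, div_le_div_iff₀ (by positivity) (by positivity)]
        calc _ = ((K : ℝ) ^ 2) ^ 2 + 2 * (2 * m + 1) ^ 2 * (K / (K + 1)) := by ring
          _ ≤ (m : ℝ) ^ 2 + 2 * (2 * m + 1) ^ 2 * 1 := by
              gcongr
              exact div_le_one_of_le₀ (by linarith) (by positivity)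
          _ ≤ 19 * (m : ℝ) ^ 2 := by nlinarith
end
end

section
/- For every positive integer m, the autocorrelation demerit factors of the Chu sequences of length 4m+2 with parameters 2m+2 and 2m are equal: ADF(Z_{4m+2}^{(2m+2)}) = ADF(Z_{4m+2}^{(2m)}). -/
open Complex Real Filter Topology

noncomputable section

/-
Since `2m/(4m+2) + (2m+2)/(4m+2) = 1`, the two Chu sequences are related by
`z_j^{(2m)} = exp(π i j²) · conj z_j^{(2m+2)} = (-1)^j · conj z_j^{(2m+2)}`.
Conjugating a sequence conjugates its autocorrelations, and multiplying it by `(-1)^j`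
multiplies its autocorrelation at shift `u` by `(-1)^u`; neither changes `|C(u)|`, so the
demerit factors agree.
-/

open ComplexConjugate

lemma seqExt_conj (n : ℕ) (A : ℤ → ℂ) (j : ℤ) :
    seqExt n (fun k => conj (A k)) j = conj (seqExt n A j) := by
  unfold seqExt
  split_ifs <;> simp

lemma seqExt_mul_left (n : ℕ) (f A : ℤ → ℂ) (j : ℤ) :
    seqExt n (fun k => f k * A k) j = f j * seqExt n A j := by
  unfold seqExt
  split_ifs <;> simp

lemma corr_conj (n : ℕ) (A B : ℤ → ℂ) (u : ℤ) :
    corr n (fun j => conj (A j)) (fun j => conj (B j)) u = conj (corr n A B u) := by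
  simp only [corr, seqExt_conj, map_sum, map_mul]

lemma corr_zpow_mul (n : ℕ) (A B : ℤ → ℂ) {ζ : ℂ} (hζ : ‖ζ‖ = 1) (u : ℤ) :
    corr n (fun j => ζ ^ j * A j) (fun j => ζ ^ j * B j) u = conj ζ ^ u * corr n A B u := by
  have hζ₀ : conj ζ ≠ 0 := by
    rw [map_ne_zero]; rintro rfl; simp at hζ
  have hunit : ζ * conj ζ = 1 := by
    rw [Complex.mul_conj, Complex.normSq_eq_norm_sq, hζ]; simp
  simp only [corr, seqExt_mul_left, Finset.mul_sum, map_mul, map_zpow₀, zpow_add₀ hζ₀]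
  refine Finset.sum_congr rfl fun j _ => ?_
  calc ζ ^ j * seqExt n A j * (conj ζ ^ j * conj ζ ^ u * conj (seqExt n B (j + u)))
      = (ζ * conj ζ) ^ j * (conj ζ ^ u * (seqExt n A j * conj (seqExt n B (j + u)))) := by
        rw [mul_zpow]; ring
    _ = _ := by rw [hunit, one_zpow, one_mul]

lemma neg_one_zpow_sq (j : ℤ) : (-1 : ℂ) ^ (j ^ 2) = (-1) ^ j := by
  rcases Int.even_or_odd j with hj | hj
  · rw [hj.neg_one_zpow, (Int.even_pow.mpr ⟨hj, two_ne_zero⟩).neg_one_zpow]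
  · rw [hj.neg_one_zpow, (Int.odd_pow.mpr (Or.inl hj)).neg_one_zpow]

lemma chu_natCast_sub (n : ℕ) (hn : n ≠ 0) (a : ℤ) :
    chu n (n - a) = fun j => (-1) ^ j * conj (chu n a j) := by
  funext j
  have hn' : (n : ℂ) ≠ 0 := Nat.cast_ne_zero.mpr hn
  have hexp : Real.pi * Complex.I * ((n - a : ℤ) : ℂ) * (j : ℂ) ^ 2 / n =
      ((j ^ 2 : ℤ) : ℂ) * (Real.pi * Complex.I) +
        conj (Real.pi * Complex.I * (a : ℂ) * (j : ℂ) ^ 2 / n) := by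
    simp only [map_div₀, map_mul, map_pow, Complex.conj_ofReal, Complex.conj_I, map_intCast,
      map_natCast]
    field_simp
    push_cast
    ring
  rw [chu, chu, hexp, Complex.exp_add, Complex.exp_int_mul, Complex.exp_pi_mul_I,
    neg_one_zpow_sq, ← Complex.exp_conj]

lemma adf_congr_norm_corr {n : ℕ} {A B : ℤ → ℂ}
    (h : ∀ u, ‖corr n A A u‖ = ‖corr n B B u‖) : adf n A = adf n B := by
  simp only [adf, h]

theorem adf_chu_odd_case_eq_general (m : ℕ) :
    adf (4 * m + 2) (chu (4 * m + 2) (2 * (m : ℤ) + 2)) =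
      adf (4 * m + 2) (chu (4 * m + 2) (2 * (m : ℤ))) := by
  have hparam : chu (4 * m + 2) (2 * (m : ℤ)) =
      chu (4 * m + 2) (((4 * m + 2 : ℕ) : ℤ) - (2 * m + 2)) := by
    congr 1; push_cast; ring
  rw [hparam, chu_natCast_sub _ (by omega)]
  refine adf_congr_norm_corr fun u => ?_
  rw [corr_zpow_mul _ _ _ (by simp), corr_conj, norm_mul, norm_zpow, Complex.norm_conj]
  simp

/-- ADF(Z_(4m+2)^(2m+2)) = ADF(Z_(4m+2)^(2m)) for every positive integer m. -/
theorem adf_chu_odd_case_eq (m : ℕ) (hm : 0 < m) :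
    adf (4 * m + 2) (chu (4 * m + 2) (2 * (m : ℤ) + 2)) =
      adf (4 * m + 2) (chu (4 * m + 2) (2 * (m : ℤ))) :=
  adf_chu_odd_case_eq_general m
end
end
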